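/- arXiv:2401.00090 — 11 statements merged into one kernel-verified Lean document; each statement's English description precedes it below -/
import Mathlib

section
/- Let X be a real-valued random variable with mean μ and variance σ² > 0, and let t < μ. Then the conditional expectation satisfies E[X | X ≥ t] ≤ μ + σ²/(μ − t), provided P(X ≥ t) > 0. -/
/-!
Centre at the mean: with `Y = X - m`, `a = m - t`, `S = {X ≥ t}`, `p = P(S)` and `s = E[Y; S]`, the
claim is `a s ≤ p v`. Since `E[Y] = 0`, `E[Y; Sᶜ] = -s`. On `Sᶜ` we have `Y < -a ≤ 0`, which gives
both `s ≥ a (1 - p)` and `E[Y²; Sᶜ] ≥ a s`, while Cauchy–Schwarz on `S` gives `p E[Y²; S] ≥ s²`.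
Hence `p v ≥ s² + p a s ≥ a s`, the last step being `s (s - a (1 - p)) ≥ 0`.
-/

open MeasureTheory

section
variable {α : Type*} [MeasurableSpace α] {μ : Measure α} [IsFiniteMeasure μ] {f : α → ℝ}

theorem sq_setIntegral_le_measureReal_mul_setIntegral_sq (hf : Integrable f μ)
    (hf2 : Integrable (fun x => f x ^ 2) μ) (s : Set α) :
    (∫ x in s, f x ∂μ) ^ 2 ≤ μ.real s * ∫ x in s, f x ^ 2 ∂μ := by
  have hquad (u : ℝ) : 0 ≤ μ.real s * (u * u) + (-2 * ∫ x in s, f x ∂μ) * u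
      + ∫ x in s, f x ^ 2 ∂μ := by
    have hexp : ∫ x in s, (f x - u) ^ 2 ∂μ
        = ∫ x in s, f x ^ 2 ∂μ - 2 * u * ∫ x in s, f x ∂μ + u ^ 2 * μ.real s := by
      have h1 : IntegrableOn (fun x => f x ^ 2) s μ := hf2.integrableOn
      have h2 : IntegrableOn (fun x => 2 * u * f x) s μ := hf.integrableOn.const_mul (2 * u)
      have h12 : IntegrableOn (fun x => f x ^ 2 - 2 * u * f x) s μ := h1.sub h2
      calc ∫ x in s, (f x - u) ^ 2 ∂μ = ∫ x in s, (f x ^ 2 - 2 * u * f x + u ^ 2) ∂μ := by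
            congr 1; ext x; ring
        _ = _ := by
            rw [integral_add h12 (integrableOn_const (measure_ne_top μ s)),
              integral_sub h1 h2, integral_const_mul, setIntegral_const, smul_eq_mul]
            ring
    have := setIntegral_nonneg_of_ae (μ := μ) (s := s) (f := fun x => (f x - u) ^ 2)
      (Filter.Eventually.of_forall fun x => sq_nonneg _)
    linarith
  have := discrim_le_zero hquad
  rw [discrim] at this
  linarith

end

section
variable {Ω : Type*} [MeasurableSpace Ω] {μ : Measure Ω} [IsProbabilityMeasure μ] {Y : Ω → ℝ}
  {S : Set Ω} {a : ℝ}

theorem mul_setIntegral_le_measureReal_mul_integral_sq (hY : Integrable Y μ)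
    (hY2 : Integrable (fun ω => Y ω ^ 2) μ) (hmean : ∫ ω, Y ω ∂μ = 0) (ha : 0 ≤ a)
    (hS : MeasurableSet S) (hSc : ∀ ω ∉ S, Y ω ≤ -a) :
    a * ∫ ω in S, Y ω ∂μ ≤ μ.real S * ∫ ω, Y ω ^ 2 ∂μ := by
  set s := ∫ ω in S, Y ω ∂μ
  set p := μ.real S
  have hcompl : ∫ ω in Sᶜ, Y ω ∂μ = -s := by
    linarith [integral_add_compl hS hY]
  have hq : μ.real Sᶜ = 1 - p := probReal_compl_eq_one_sub hS
  have htail : a * (1 - p) ≤ s := by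
    have := setIntegral_mono_on hY.integrableOn (integrableOn_const (measure_ne_top μ Sᶜ))
      hS.compl fun ω hω => hSc ω hω
    rw [hcompl, setIntegral_const, hq, smul_eq_mul] at this
    linarith
  have hsq_compl : a * s ≤ ∫ ω in Sᶜ, Y ω ^ 2 ∂μ := by
    have := setIntegral_mono_on (hY.const_mul (-a)).integrableOn hY2.integrableOn hS.compl
      fun ω hω => by nlinarith [hSc ω hω]
    rwa [integral_const_mul, hcompl, neg_mul_neg] at this
  have hCS : s ^ 2 ≤ p * ∫ ω in S, Y ω ^ 2 ∂μ :=
    sq_setIntegral_le_measureReal_mul_setIntegral_sq hY hY2 S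
  have hp : 0 ≤ p := measureReal_nonneg
  have hs : 0 ≤ s := (mul_nonneg ha (hq ▸ measureReal_nonneg)).trans htail
  rw [← integral_add_compl hS hY2]
  nlinarith [mul_le_mul_of_nonneg_left hsq_compl hp, mul_nonneg hs (sub_nonneg.2 htail)]
end

theorem stmt0_general (P : Measure ℝ) [IsProbabilityMeasure P]
    (m v t : ℝ)
    (hX : Integrable (fun x => x) P)
    (hX2 : Integrable (fun x => x ^ 2) P)
    (hmean : ∫ x, x ∂P = m)
    (hvar : ∫ x, (x - m) ^ 2 ∂P = v)
    (ht : t < m)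
    (hpos : 0 < (P {x : ℝ | t ≤ x}).toReal) :
    (∫ x in {x : ℝ | t ≤ x}, x ∂P) / (P {x : ℝ | t ≤ x}).toReal ≤ m + v / (m - t) := by
  have hY : Integrable (fun x => x - m) P := hX.sub (integrable_const m)
  have hY2 : Integrable (fun x => (x - m) ^ 2) P := by
    have hexp : (fun x : ℝ => (x - m) ^ 2) = fun x => x ^ 2 - 2 * m * x + m ^ 2 := by
      ext x; ring
    rw [hexp]
    exact (hX2.sub (hX.const_mul (2 * m))).add (integrable_const _)
  have hcentered : ∫ x, (x - m) ∂P = 0 := by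
    simp [integral_sub hX (integrable_const m), hmean]
  have key := mul_setIntegral_le_measureReal_mul_integral_sq (S := {x : ℝ | t ≤ x}) hY hY2
    hcentered (sub_nonneg.2 ht.le) measurableSet_Ici fun x (hx : ¬t ≤ x) => by
      linarith [not_le.1 hx]
  have hsplit : ∫ x in {x : ℝ | t ≤ x}, x ∂P
      = ∫ x in {x : ℝ | t ≤ x}, (x - m) ∂P + m * (P {x : ℝ | t ≤ x}).toReal := by
    rw [integral_sub hX.integrableOn (integrableOn_const (measure_ne_top P _)), setIntegral_const,
      smul_eq_mul, measureReal_def]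
    ring
  rw [hvar, measureReal_def] at key
  rw [hsplit, div_le_iff₀ hpos, add_mul, add_comm, add_le_add_iff_left, div_mul_eq_mul_div,
    le_div_iff₀ (by linarith)]
  linarith

theorem stmt0 (P : Measure ℝ) [IsProbabilityMeasure P]
    (m v t : ℝ)
    (hX : Integrable (fun x => x) P)
    (hX2 : Integrable (fun x => x ^ 2) P)
    (hmean : ∫ x, x ∂P = m)
    (hvar : ∫ x, (x - m) ^ 2 ∂P = v)
    (hv : 0 < v) (ht : t < m)
    (hpos : 0 < (P {x : ℝ | t ≤ x}).toReal) :
    (∫ x in {x : ℝ | t ≤ x}, x ∂P) / (P {x : ℝ | t ≤ x}).toReal ≤ m + v / (m - t) :=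
  stmt0_general P m v t hX hX2 hmean hvar ht hpos
end

section
/- Fix μ ∈ ℝ, σ > 0, and t < μ. Set x₀ = μ + σ²/(μ − t). The two-point distribution placing probability p_t = σ²/(σ² + (μ−t)²) on t and probability p_{x₀} = (μ−t)²/(σ² + (μ−t)²) on x₀ has mean μ and variance σ², and its conditional expectation given X ≥ s equals x₀ for every s with t < s ≤ x₀. -/
open MeasureTheory

theorem stmt1 (m s t : ℝ) (hs : 0 < s) (ht : t < m) :
    let x0 := m + s ^ 2 / (m - t)
    let pt := s ^ 2 / (s ^ 2 + (m - t) ^ 2)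
    let px := (m - t) ^ 2 / (s ^ 2 + (m - t) ^ 2)
    let P : Measure ℝ :=
      ENNReal.ofReal pt • Measure.dirac t + ENNReal.ofReal px • Measure.dirac x0
    (∫ x, x ∂P = m) ∧ (∫ x, (x - m) ^ 2 ∂P = s ^ 2) ∧
      ∀ u, t < u → u ≤ x0 →
        (∫ x in {x : ℝ | u ≤ x}, x ∂P) / (P {x : ℝ | u ≤ x}).toReal = x0 := by
  intro x0 pt px P
  have hd : 0 < m - t := sub_pos.mpr ht
  have hden : 0 < s ^ 2 + (m - t) ^ 2 := by positivity
  have hpt : 0 ≤ pt := by positivity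
  have hpx : 0 < px := by positivity
  have key : ∀ f : ℝ → ℝ, ∫ x, f x ∂P = pt * f t + px * f x0 := by
    intro f
    have h1 : Integrable f (Measure.dirac t) :=
      (integrable_const (f t)).congr (ae_eq_dirac f).symm
    have h2 : Integrable f (Measure.dirac x0) :=
      (integrable_const (f x0)).congr (ae_eq_dirac f).symm
    rw [show P = ENNReal.ofReal pt • Measure.dirac t + ENNReal.ofReal px • Measure.dirac x0
        from rfl,
      integral_add_measure (h1.smul_measure ENNReal.ofReal_ne_top)
        (h2.smul_measure ENNReal.ofReal_ne_top),
      integral_smul_measure, integral_smul_measure, integral_dirac, integral_dirac,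
      ENNReal.toReal_ofReal hpt, ENNReal.toReal_ofReal hpx.le]
    simp [smul_eq_mul]
  refine ⟨?_, ?_, ?_⟩
  · rw [key (fun x => x)]
    show pt * t + px * (m + s ^ 2 / (m - t)) = m
    simp only [pt, px]
    field_simp
    ring
  · rw [key (fun x => (x - m) ^ 2)]
    show pt * (t - m) ^ 2 + px * (m + s ^ 2 / (m - t) - m) ^ 2 = s ^ 2
    simp only [pt, px]
    field_simp
    ring
  · intro u hu hux
    have hS : {x : ℝ | u ≤ x} = Set.Ici u := rfl
    have htS : t ∉ Set.Ici u := by simpa using hu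
    have hxS : x0 ∈ Set.Ici u := hux
    have hrestrict : P.restrict {x : ℝ | u ≤ x} = ENNReal.ofReal px • Measure.dirac x0 := by
      rw [hS, show P = ENNReal.ofReal pt • Measure.dirac t + ENNReal.ofReal px • Measure.dirac x0
          from rfl, Measure.restrict_add, Measure.restrict_smul, Measure.restrict_smul,
        restrict_dirac, restrict_dirac]
      simp [htS, hxS]
    have hPS : P {x : ℝ | u ≤ x} = ENNReal.ofReal px := by
      have := congrArg (fun μ : Measure ℝ => μ Set.univ) hrestrict
      simpa [Measure.restrict_apply_univ] using this
    rw [show (∫ x in {x : ℝ | u ≤ x}, x ∂P) = ∫ x, x ∂(P.restrict {x : ℝ | u ≤ x}) from rfl,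
      hrestrict, integral_smul_measure, integral_dirac, hPS,
      ENNReal.toReal_ofReal hpx.le]
    simp only [smul_eq_mul]
    field_simp
end

section
/- Fix μ ∈ ℝ, σ > 0, and t ≥ μ. For each natural number k ≥ 1, define the two-point distribution P_k placing probability 1/(k²σ² + 1) on μ + kσ² and the remaining probability 1 − 1/(k²σ² + 1) on μ − 1/k. Then each P_k has mean μ, variance at most σ², and E_{P_k}[X | X ≥ t] → ∞ as k → ∞. Hence sup over distributions with mean μ and variance ≤ σ² of E[X | X ≥ t] is +∞. -/
open MeasureTheory

lemma integrable_dirac'' {f : ℝ → ℝ} (hf : Measurable f) (a : ℝ) :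
    Integrable f (Measure.dirac a) := by
  refine ⟨hf.aestronglyMeasurable, ?_⟩
  rw [HasFiniteIntegral, lintegral_dirac]
  exact ENNReal.coe_lt_top

lemma intg_two_point {f : ℝ → ℝ} (hf : Measurable f) (a b : ℝ) (c d : ℝ)
    (hc : 0 ≤ c) (hd : 0 ≤ d) :
    ∫ x, f x ∂(ENNReal.ofReal c • Measure.dirac a + ENNReal.ofReal d • Measure.dirac b)
      = c * f a + d * f b := by
  rw [integral_add_measure ((integrable_dirac'' hf a).smul_measure ENNReal.ofReal_ne_top)
      ((integrable_dirac'' hf b).smul_measure ENNReal.ofReal_ne_top),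
    integral_smul_measure, integral_smul_measure, integral_dirac, integral_dirac,
    ENNReal.toReal_ofReal hc, ENNReal.toReal_ofReal hd]
  rfl

lemma setintg_two_point {f : ℝ → ℝ} (a b : ℝ) (c d : ℝ) (hc : 0 ≤ c)
    {S : Set ℝ} (ha : a ∈ S) (hb : b ∉ S) :
    ∫ x in S, f x ∂(ENNReal.ofReal c • Measure.dirac a + ENNReal.ofReal d • Measure.dirac b)
      = c * f a := by
  classical
  rw [Measure.restrict_add, Measure.restrict_smul, Measure.restrict_smul,
    MeasureTheory.restrict_dirac, MeasureTheory.restrict_dirac, if_pos ha, if_neg hb, smul_zero, add_zero,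
    integral_smul_measure, integral_dirac, ENNReal.toReal_ofReal hc]
  rfl

lemma meas_two_point (a b : ℝ) (c d : ENNReal)
    {S : Set ℝ} (ha : a ∈ S) (hb : b ∉ S) :
    (c • Measure.dirac a + d • Measure.dirac b) S = c := by
  simp [Measure.dirac_apply, Set.indicator_of_mem ha, Set.indicator_of_notMem hb]

theorem stmt2 (m s t : ℝ) (hs : 0 < s) (ht : m ≤ t) :
    let P : ℕ → Measure ℝ := fun k =>
      ENNReal.ofReal (1 / ((k : ℝ) ^ 2 * s ^ 2 + 1)) • Measure.dirac (m + (k : ℝ) * s ^ 2) +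
        ENNReal.ofReal (1 - 1 / ((k : ℝ) ^ 2 * s ^ 2 + 1)) • Measure.dirac (m - 1 / (k : ℝ))
    (∀ k : ℕ, 1 ≤ k →
        IsProbabilityMeasure (P k) ∧ (∫ x, x ∂(P k) = m) ∧
          (∫ x, (x - m) ^ 2 ∂(P k) ≤ s ^ 2)) ∧
      Filter.Tendsto
        (fun k => (∫ x in {x : ℝ | t ≤ x}, x ∂(P k)) / ((P k) {x : ℝ | t ≤ x}).toReal)
        Filter.atTop Filter.atTop ∧
      ∀ M : ℝ, ∃ Q : Measure ℝ, IsProbabilityMeasure Q ∧ (∫ x, x ∂Q = m) ∧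
        (∫ x, (x - m) ^ 2 ∂Q ≤ s ^ 2) ∧ 0 < (Q {x : ℝ | t ≤ x}).toReal ∧
        M < (∫ x in {x : ℝ | t ≤ x}, x ∂Q) / (Q {x : ℝ | t ≤ x}).toReal := by
  intro P
  have hs2 : 0 < s ^ 2 := by positivity
  have hden : ∀ k : ℕ, 0 < (k : ℝ) ^ 2 * s ^ 2 + 1 := fun k => by positivity
  have hp0 : ∀ k : ℕ, 0 < 1 / ((k : ℝ) ^ 2 * s ^ 2 + 1) := fun k => by positivity
  have hp1 : ∀ k : ℕ, 0 ≤ 1 - 1 / ((k : ℝ) ^ 2 * s ^ 2 + 1) := fun k => by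
    have : 1 / ((k : ℝ) ^ 2 * s ^ 2 + 1) ≤ 1 := by
      rw [div_le_one (hden k)]; nlinarith [sq_nonneg ((k:ℝ)*s)]
    linarith
  -- basic properties for k ≥ 1
  have hbasic : ∀ k : ℕ, 1 ≤ k →
      IsProbabilityMeasure (P k) ∧ (∫ x, x ∂(P k) = m) ∧
        (∫ x, (x - m) ^ 2 ∂(P k) ≤ s ^ 2) := by
    intro k hk
    have hK : (1:ℝ) ≤ (k:ℝ) := by exact_mod_cast hk
    have hK0 : (k:ℝ) ≠ 0 := by linarith
    have hd0 : ((k : ℝ) ^ 2 * s ^ 2 + 1) ≠ 0 := (hden k).ne'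
    refine ⟨⟨?_⟩, ?_, ?_⟩
    · show (P k) Set.univ = 1
      simp only [P, Measure.coe_add, Measure.coe_smul, Pi.add_apply, Pi.smul_apply,
        measure_univ, smul_eq_mul, mul_one]
      rw [← ENNReal.ofReal_add (hp0 k).le (hp1 k)]
      norm_num
    · simp only [P]
      rw [intg_two_point (f := fun x => x) measurable_id _ _ _ _ (hp0 k).le (hp1 k)]
      field_simp
      ring
    · simp only [P]
      rw [intg_two_point (by fun_prop) _ _ _ _ (hp0 k).le (hp1 k)]
      have : 1 / ((k : ℝ) ^ 2 * s ^ 2 + 1) * (m + (k:ℝ) * s ^ 2 - m) ^ 2 +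
          (1 - 1 / ((k : ℝ) ^ 2 * s ^ 2 + 1)) * (m - 1 / (k:ℝ) - m) ^ 2 = s ^ 2 := by
        field_simp
        ring
      linarith
  -- key computation of ratio for large k
  have key : ∀ k : ℕ, 1 ≤ k → t ≤ m + (k : ℝ) * s ^ 2 →
      ((P k) {x : ℝ | t ≤ x}).toReal = 1 / ((k : ℝ) ^ 2 * s ^ 2 + 1) ∧
      (∫ x in {x : ℝ | t ≤ x}, x ∂(P k)) =
        (1 / ((k : ℝ) ^ 2 * s ^ 2 + 1)) * (m + (k : ℝ) * s ^ 2) := by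
    intro k hk hkt
    have hK : (1:ℝ) ≤ (k:ℝ) := by exact_mod_cast hk
    have ha : (m + (k : ℝ) * s ^ 2) ∈ {x : ℝ | t ≤ x} := hkt
    have hb : (m - 1 / (k : ℝ)) ∉ {x : ℝ | t ≤ x} := by
      simp only [Set.mem_setOf_eq, not_le]
      have : 0 < 1 / (k:ℝ) := by positivity
      linarith
    constructor
    · simp only [P]
      rw [meas_two_point _ _ _ _ ha hb,
        ENNReal.toReal_ofReal (hp0 k).le]
    · simp only [P]
      rw [setintg_two_point _ _ _ _ (hp0 k).le ha hb]
  have hratio : ∀ k : ℕ, 1 ≤ k → t ≤ m + (k : ℝ) * s ^ 2 →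
      (∫ x in {x : ℝ | t ≤ x}, x ∂(P k)) / ((P k) {x : ℝ | t ≤ x}).toReal
        = m + (k : ℝ) * s ^ 2 := by
    intro k hk hkt
    obtain ⟨h1, h2⟩ := key k hk hkt
    rw [h1, h2, mul_comm, mul_div_assoc, div_self (hp0 k).ne', mul_one]
  -- the limit function
  have hlim : Filter.Tendsto (fun k : ℕ => m + (k : ℝ) * s ^ 2) Filter.atTop Filter.atTop := by
    apply Filter.tendsto_atTop_add_const_left
    exact (tendsto_natCast_atTop_atTop).atTop_mul_const hs2
  obtain ⟨N, hN⟩ := exists_nat_ge ((t - m) / s ^ 2)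
  have hev : ∀ k : ℕ, N + 1 ≤ k → 1 ≤ k ∧ t ≤ m + (k : ℝ) * s ^ 2 := by
    intro k hk
    have h1 : 1 ≤ k := le_trans (Nat.le_add_left 1 N) hk
    have hNk : (N : ℝ) ≤ (k : ℝ) := by exact_mod_cast le_trans (Nat.le_succ N) hk
    have : (t - m) / s ^ 2 ≤ (k : ℝ) := le_trans hN hNk
    rw [div_le_iff₀ hs2] at this
    exact ⟨h1, by linarith⟩
  have htend : Filter.Tendsto
      (fun k => (∫ x in {x : ℝ | t ≤ x}, x ∂(P k)) / ((P k) {x : ℝ | t ≤ x}).toReal)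
      Filter.atTop Filter.atTop := by
    refine hlim.congr' ?_
    filter_upwards [Filter.eventually_atTop.2 ⟨N + 1, fun k hk => hev k hk⟩] with k hk
    exact (hratio k hk.1 hk.2).symm
  refine ⟨hbasic, htend, fun M => ?_⟩
  obtain ⟨k, hk2⟩ := Filter.eventually_atTop.1
    ((htend.eventually_gt_atTop M).and
      (Filter.eventually_atTop.2 ⟨N + 1, fun k hk => hev k hk⟩))
  obtain ⟨hM, hk, hkt⟩ := hk2 k le_rfl
  obtain ⟨hP, hmean, hvar⟩ := hbasic k hk
  refine ⟨P k, hP, hmean, hvar, ?_, hM⟩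
  rw [(key k hk hkt).1]
  exact hp0 k
end

section
/- Let X be a real-valued random variable supported in [a, b], with mean μ and mean absolute deviation E|X − μ| = d > 0. Suppose t < μ − d(b−μ)/(2(b−μ) − d) and P(X ≥ t) > 0. Then E[X | X ≥ t] ≤ μ + d(μ−t)/(2(μ−t) − d). -/
/-!
Since `E (X - μ) = 0`, both `E (X - μ)⁺` and `E (μ - X)⁺` equal `d / 2`. On the event
`S = {X ≥ t}` this gives `∫_S (X - μ) ≤ d / 2`, and since `X < t` off `S`, Markov's inequality
gives `(μ - t) P(Sᶜ) ≤ d / 2`. Hence `E[X | S] ≤ μ + d / (2 P(S))` with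
`P(S) ≥ 1 - d / (2 (μ - t))`, which is the bound.
-/

open MeasureTheory

theorem Set.indicator_le_half_add_abs {α : Type*} (s : Set α) (f : α → ℝ) (x : α) :
    s.indicator f x ≤ (f x + |f x|) / 2 := by
  by_cases hx : x ∈ s
  · rw [Set.indicator_of_mem hx]
    linarith [le_abs_self (f x)]
  · rw [Set.indicator_of_notMem hx]
    linarith [neg_abs_le (f x)]

section

variable {Ω : Type*} [MeasurableSpace Ω] {μ : Measure Ω} {s : Set Ω}

theorem setIntegral_le_half_integral_add_abs {f : Ω → ℝ} (hf : Integrable f μ)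
    (hs : MeasurableSet s) :
    ∫ ω in s, f ω ∂μ ≤ (∫ ω, f ω ∂μ + ∫ ω, |f ω| ∂μ) / 2 := by
  rw [← integral_indicator hs, ← integral_add hf hf.abs, ← integral_div]
  exact integral_mono (hf.indicator hs) ((hf.add hf.abs).div_const 2)
    (Set.indicator_le_half_add_abs s f)

variable [IsProbabilityMeasure μ] {X : Ω → ℝ} {m : ℝ}

theorem integral_sub_eq_zero_of_integral_eq (hX : Integrable X μ) (hm : ∫ ω, X ω ∂μ = m) :
    ∫ ω, (X ω - m) ∂μ = 0 := by
  rw [integral_sub hX (integrable_const m), hm, integral_const, probReal_univ, one_smul, sub_self]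

theorem setIntegral_le_mul_measureReal_add_half_integral_abs (hX : Integrable X μ)
    (hm : ∫ ω, X ω ∂μ = m) (hs : MeasurableSet s) :
    ∫ ω in s, X ω ∂μ ≤ m * μ.real s + (∫ ω, |X ω - m| ∂μ) / 2 := by
  have h := setIntegral_le_half_integral_add_abs (f := fun ω => X ω - m)
    (hX.sub (integrable_const m)) hs
  rw [integral_sub_eq_zero_of_integral_eq hX hm, zero_add,
    integral_sub hX.integrableOn (integrableOn_const (measure_ne_top _ _)), setIntegral_const,
    smul_eq_mul] at h
  linarith

theorem sub_mul_measureReal_le_half_integral_abs {t : ℝ} (hX : Integrable X μ)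
    (hm : ∫ ω, X ω ∂μ = m) (hs : MeasurableSet s) (hXt : ∀ ω ∈ s, X ω ≤ t) :
    (m - t) * μ.real s ≤ (∫ ω, |X ω - m| ∂μ) / 2 := by
  have hmX : Integrable (fun ω => m - X ω) μ := (integrable_const m).sub hX
  have hmX0 : ∫ ω, (m - X ω) ∂μ = 0 := by
    rw [integral_sub (integrable_const m) hX, hm, integral_const, probReal_univ, one_smul,
      sub_self]
  calc (m - t) * μ.real s ≤ ∫ ω in s, (m - X ω) ∂μ :=
        setIntegral_ge_of_const_le_real hs (measure_ne_top _ _)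
          (fun ω hω => by linarith [hXt ω hω]) hmX.integrableOn
    _ ≤ (∫ ω, (m - X ω) ∂μ + ∫ ω, |m - X ω| ∂μ) / 2 :=
        setIntegral_le_half_integral_add_abs hmX hs
    _ = (∫ ω, |X ω - m| ∂μ) / 2 := by simp_rw [hmX0, zero_add, abs_sub_comm]

end

theorem stmt3_general (P : Measure ℝ) [IsProbabilityMeasure P] (b m d t : ℝ)
    (hX : Integrable (fun x => x) P)
    (hmean : ∫ x, x ∂P = m)
    (hmad : ∫ x, |x - m| ∂P = d)
    (hdb : d < 2 * (b - m))
    (ht : t < m - d * (b - m) / (2 * (b - m) - d))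
    (hpos : 0 < (P {x : ℝ | t ≤ x}).toReal) :
    (∫ x in {x : ℝ | t ≤ x}, x ∂P) / (P {x : ℝ | t ≤ x}).toReal
      ≤ m + d * (m - t) / (2 * (m - t) - d) := by
  set S := {x : ℝ | t ≤ x}
  change 0 < P.real S at hpos
  change _ / P.real S ≤ _
  have hS : MeasurableSet S := measurableSet_Ici
  have hd : 0 ≤ d := hmad ▸ integral_nonneg fun _ => abs_nonneg _
  have hdt : d < 2 * (m - t) := by
    have : d / 2 ≤ d * (b - m) / (2 * (b - m) - d) := by
      rw [div_le_div_iff₀ two_pos (by linarith)]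
      nlinarith
    linarith
  have hupper : ∫ x in S, x ∂P ≤ m * P.real S + d / 2 :=
    hmad ▸ setIntegral_le_mul_measureReal_add_half_integral_abs hX hmean hS
  have htail : (m - t) * (1 - P.real S) ≤ d / 2 := by
    rw [← probReal_compl_eq_one_sub hS, ← hmad]
    exact sub_mul_measureReal_le_half_integral_abs hX hmean hS.compl
      fun x hx => (not_le.mp (show ¬t ≤ x from hx)).le
  have hhalf : d / 2 ≤ d * (m - t) / (2 * (m - t) - d) * P.real S := by
    rw [div_mul_eq_mul_div, le_div_iff₀ (by linarith)]
    nlinarith [mul_le_mul_of_nonneg_left htail hd]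
  rw [div_le_iff₀ hpos, add_mul]
  linarith

theorem stmt3 (P : Measure ℝ) [IsProbabilityMeasure P] (a b m d t : ℝ)
    (hsupp : ∀ᵐ x ∂P, x ∈ Set.Icc a b)
    (hX : Integrable (fun x => x) P)
    (hm : m ∈ Set.Ioo a b)
    (hmean : ∫ x, x ∂P = m)
    (hmad : ∫ x, |x - m| ∂P = d)
    (hd : 0 < d) (hdb : d < 2 * (b - m))
    (ht : t < m - d * (b - m) / (2 * (b - m) - d))
    (hpos : 0 < (P {x : ℝ | t ≤ x}).toReal) :
    (∫ x in {x : ℝ | t ≤ x}, x ∂P) / (P {x : ℝ | t ≤ x}).toReal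
      ≤ m + d * (m - t) / (2 * (m - t) - d) :=
  stmt3_general P b m d t hX hmean hmad hdb ht hpos
end

section
/- Let X be supported in [a, b] with mean μ and mean absolute deviation d. Then for any t, E[X | X ≥ t] ≤ b; and for any μ − d(b−μ)/(2(b−μ) − d) ≤ t < μ, there is a feasible two-point distribution with support {(b(d−2μ)+2μ²)/(−2b+d+2μ), b}, probabilities 1 − d/(2(b−μ)) and d/(2(b−μ)), having mean μ and MAD d, whose conditional expectation given X ≥ t equals b. -/
/-!
The bound on the conditional mean holds because the set integral of `X ≤ b` is dominated by that
of the constant `b`. For the two-point law, the mean condition `p x₁ + (1 - p) b = μ` forces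
`x₁ < μ`, so its mean absolute deviation is `2 (1 - p) (b - μ)`, which is `d` exactly for
`1 - p = d / (2 (b - μ))`.
-/

open MeasureTheory

theorem setIntegral_div_measureReal_le {α : Type*} [MeasurableSpace α] {μ : Measure α}
    {s : Set α} {f : α → ℝ} {b : ℝ} (hf : IntegrableOn f s μ) (hfb : ∀ᵐ x ∂μ, f x ≤ b)
    (hs : 0 < μ.real s) : (∫ x in s, f x ∂μ) / μ.real s ≤ b := by
  have hs_fin : μ s ≠ ⊤ := (ENNReal.toReal_pos_iff.mp hs).2.ne
  rw [div_le_iff₀ hs, mul_comm, ← smul_eq_mul, ← setIntegral_const]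
  exact integral_mono_ae hf (integrableOn_const hs_fin) (ae_restrict_of_ae hfb)

theorem setIntegral_div_measureReal_eq_of_restrict_eq_smul_dirac {α : Type*} [MeasurableSpace α]
    [MeasurableSingletonClass α] {μ : Measure α} {s : Set α} {q : ℝ} {y : α} (f : α → ℝ)
    (hq : 0 < q) (h : μ.restrict s = ENNReal.ofReal q • Measure.dirac y) :
    (∫ x in s, f x ∂μ) / μ.real s = f y := by
  have hμs : μ.real s = q := by
    rw [← measureReal_restrict_apply_univ, h]
    simp [hq.le]
  rw [h, hμs, integral_smul_measure, integral_dirac, ENNReal.toReal_ofReal hq.le, smul_eq_mul,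
    mul_div_cancel_left₀ _ hq.ne']

section TwoPoint

variable {α E : Type*} [MeasurableSpace α] [MeasurableSingletonClass α]
  [NormedAddCommGroup E] [NormedSpace ℝ E] [CompleteSpace E]

theorem integral_smul_dirac_add_smul_dirac (f : α → E) {p q : ℝ} (hp : 0 ≤ p) (hq : 0 ≤ q)
    (x y : α) :
    ∫ z, f z ∂(ENNReal.ofReal p • Measure.dirac x + ENNReal.ofReal q • Measure.dirac y) =
      p • f x + q • f y := by
  have hint : ∀ z : α, Integrable f (Measure.dirac z) := fun z => integrable_dirac enorm_lt_top
  rw [integral_add_measure ((hint x).smul_measure ENNReal.ofReal_ne_top)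
      ((hint y).smul_measure ENNReal.ofReal_ne_top),
    integral_smul_measure, integral_smul_measure, integral_dirac, integral_dirac,
    ENNReal.toReal_ofReal hp, ENNReal.toReal_ofReal hq]

theorem restrict_smul_dirac_add_smul_dirac {s : Set α} {x y : α} (hx : x ∉ s) (hy : y ∈ s)
    (c c' : ENNReal) :
    (c • Measure.dirac x + c' • Measure.dirac y).restrict s = c' • Measure.dirac y := by
  classical
  rw [Measure.restrict_add, Measure.restrict_smul, Measure.restrict_smul, restrict_dirac,
    restrict_dirac, if_neg hx, if_pos hy, smul_zero, zero_add]

end TwoPoint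

theorem two_point_mean_abs_dev {p x y m : ℝ} (hxm : x ≤ m)
    (hmy : m ≤ y) (hmean : p * x + (1 - p) * y = m) :
    p * |x - m| + (1 - p) * |y - m| = 2 * (1 - p) * (y - m) := by
  rw [abs_of_nonpos (sub_nonpos.mpr hxm), abs_of_nonneg (sub_nonneg.mpr hmy)]
  linear_combination -hmean

section ExtremalParameters

variable {b m d : ℝ}

theorem extremal_weight_pos (hd : 0 < d) (hdb : d < 2 * (b - m)) : 0 < 1 - d / (2 * (b - m)) := by
  have hbm : 0 < 2 * (b - m) := hd.trans hdb
  rw [sub_pos, div_lt_one hbm]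
  exact hdb

theorem extremal_abs_dev (hd : 0 < d) (hdb : d < 2 * (b - m)) :
    2 * (1 - (1 - d / (2 * (b - m)))) * (b - m) = d := by
  have hbm : b - m ≠ 0 := by linarith
  field_simp
  ring

theorem extremal_mean (hd : 0 < d) (hdb : d < 2 * (b - m)) :
    (1 - d / (2 * (b - m))) * ((b * (d - 2 * m) + 2 * m ^ 2) / (-2 * b + d + 2 * m)) +
      (1 - (1 - d / (2 * (b - m)))) * b = m := by
  have hbm : b - m ≠ 0 := by linarith
  have hden : 2 * (b - m) - d ≠ 0 := by linarith
  rw [show -2 * b + d + 2 * m = -(2 * (b - m) - d) by ring]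
  field_simp
  ring

end ExtremalParameters

theorem stmt4 (a b m d : ℝ) (hd : 0 < d) (hdb : d < 2 * (b - m)) :
    (∀ (P : Measure ℝ), IsProbabilityMeasure P → (∀ᵐ x ∂P, x ∈ Set.Icc a b) →
        Integrable (fun x => x) P → ∀ t : ℝ, 0 < (P {x : ℝ | t ≤ x}).toReal →
        (∫ x in {x : ℝ | t ≤ x}, x ∂P) / (P {x : ℝ | t ≤ x}).toReal ≤ b) ∧
    (let x1 := (b * (d - 2 * m) + 2 * m ^ 2) / (-2 * b + d + 2 * m)
     let p := 1 - d / (2 * (b - m))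
     let Q : Measure ℝ := ENNReal.ofReal p • Measure.dirac x1 +
       ENNReal.ofReal (1 - p) • Measure.dirac b
     a ≤ x1 →
       (∫ x, x ∂Q = m) ∧ (∫ x, |x - m| ∂Q = d) ∧
       ∀ t, m - d * (b - m) / (2 * (b - m) - d) ≤ t → t < m → x1 < t → t ≤ b →
         (∫ x in {x : ℝ | t ≤ x}, x ∂Q) / (Q {x : ℝ | t ≤ x}).toReal = b) := by
  refine ⟨fun P _ hP hint t ht =>
    setIntegral_div_measureReal_le hint.integrableOn (hP.mono fun x hx => hx.2) ht, ?_⟩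
  intro x1 p Q _
  have hp : 0 < p := extremal_weight_pos hd hdb
  have hq : 0 < 1 - p := by simp only [p, sub_sub_cancel]; exact div_pos hd (hd.trans hdb)
  have hmean : p * x1 + (1 - p) * b = m := extremal_mean hd hdb
  have hbm : m < b := by linarith
  have hx1m : x1 < m := by nlinarith
  refine ⟨?_, ?_, fun t _ _ hx1t htb => ?_⟩
  · simpa [Q, integral_smul_dirac_add_smul_dirac _ hp.le hq.le] using hmean
  · rw [integral_smul_dirac_add_smul_dirac _ hp.le hq.le, smul_eq_mul, smul_eq_mul,
      two_point_mean_abs_dev hx1m.le hbm.le hmean]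
    exact extremal_abs_dev hd hdb
  · exact setIntegral_div_measureReal_eq_of_restrict_eq_smul_dirac _ hq
      (restrict_smul_dirac_add_smul_dirac (not_le.mpr hx1t) htb _ _)
end

section
/- Let X have a distribution symmetric about μ with variance σ² > 0, and let t < μ − σ. Then E[X | X ≥ t] ≤ μ + (μ−t)σ²/(2(t−μ)² − σ²), provided P(X ≥ t) > 0. -/
/-!
Write `t = m - a` with `a > σ`. Reflection `x ↦ 2m - x` and `E[X - m] = 0` turn
`∫_{X ≥ m - a} (X - m)` into the upper-tail integral `I = ∫_{X > m + a} (X - m)`, and show that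
the two tails `X < m - a`, `X > m + a` carry the same probability `q` and the same share
`J = ∫_{X > m + a} (X - m)²` of the variance, so `2J ≤ σ²`. On the upper tail `X - m > a`, hence
`a I ≤ J` and `a² q ≤ J`. Then `E[X | X ≥ t] = m + I / (1 - q)` with `I ≤ σ² / (2a)` and
`1 - q ≥ 1 - σ² / (2a²)`.
-/

open MeasureTheory Set

lemma measurableEmbedding_const_sub (c : ℝ) : MeasurableEmbedding (fun x : ℝ => c - x) :=
  (MeasurableEquiv.subLeft c).measurableEmbedding

section Symmetric

variable {P : Measure ℝ} {m : ℝ}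

lemma setIntegral_eq_setIntegral_preimage_of_map_eq (hsym : P.map (fun x => 2 * m - x) = P)
    (f : ℝ → ℝ) (B : Set ℝ) :
    ∫ x in B, f x ∂P = ∫ x in (fun x => 2 * m - x) ⁻¹' B, f (2 * m - x) ∂P := by
  conv_lhs => rw [← hsym]
  exact (measurableEmbedding_const_sub _).setIntegral_map f B

lemma measureReal_Iio_eq_measureReal_Ioi_of_map_eq (hsym : P.map (fun x => 2 * m - x) = P)
    (a : ℝ) : P.real (Iio (m - a)) = P.real (Ioi (m + a)) := by
  conv_rhs => rw [← hsym]
  rw [map_measureReal_apply (measurableEmbedding_const_sub _).measurable measurableSet_Ioi,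
    preimage_const_sub_Ioi]
  ring_nf

lemma setIntegral_Ici_sub_eq_setIntegral_Ioi_of_map_eq (hsym : P.map (fun x => 2 * m - x) = P)
    (hX : Integrable (fun x => x - m) P) (hmean : ∫ x, (x - m) ∂P = 0) (a : ℝ) :
    ∫ x in Ici (m - a), (x - m) ∂P = ∫ x in Ioi (m + a), (x - m) ∂P := by
  have hsplit := integral_add_compl (measurableSet_Iic (a := m + a)) hX
  rw [compl_Iic, hmean] at hsplit
  calc ∫ x in Ici (m - a), (x - m) ∂P
      = ∫ x in Iic (m + a), -(x - m) ∂P := by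
        rw [setIntegral_eq_setIntegral_preimage_of_map_eq hsym, preimage_const_sub_Ici]
        ring_nf
    _ = ∫ x in Ioi (m + a), (x - m) ∂P := by
        rw [integral_neg]
        linarith

lemma two_mul_setIntegral_Ioi_sq_le_of_map_eq (hsym : P.map (fun x => 2 * m - x) = P)
    (hX2 : Integrable (fun x => (x - m) ^ 2) P) {a : ℝ} (ha : 0 ≤ a) :
    2 * ∫ x in Ioi (m + a), (x - m) ^ 2 ∂P ≤ ∫ x, (x - m) ^ 2 ∂P := by
  have hrefl : ∫ x in Ioi (m + a), (x - m) ^ 2 ∂P = ∫ x in Iio (m - a), (x - m) ^ 2 ∂P := by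
    rw [setIntegral_eq_setIntegral_preimage_of_map_eq hsym, preimage_const_sub_Ioi]
    ring_nf
  have hdisj : Disjoint (Iio (m - a)) (Ioi (m + a)) :=
    Iio_disjoint_Ioi_of_le (by linarith)
  calc 2 * ∫ x in Ioi (m + a), (x - m) ^ 2 ∂P
      = ∫ x in Iio (m - a) ∪ Ioi (m + a), (x - m) ^ 2 ∂P := by
        rw [setIntegral_union hdisj measurableSet_Ioi hX2.integrableOn hX2.integrableOn, ← hrefl]
        ring
    _ ≤ ∫ x, (x - m) ^ 2 ∂P := setIntegral_le_integral hX2 (ae_of_all _ fun x => sq_nonneg _)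

end Symmetric

section Tail

variable {P : Measure ℝ} {m a : ℝ}

lemma sq_mul_measureReal_Ioi_le_setIntegral [IsFiniteMeasure P]
    (hX2 : Integrable (fun x => (x - m) ^ 2) P) (ha : 0 ≤ a) :
    a ^ 2 * P.real (Ioi (m + a)) ≤ ∫ x in Ioi (m + a), (x - m) ^ 2 ∂P := by
  rw [mul_comm, ← smul_eq_mul, ← setIntegral_const]
  refine setIntegral_mono_on (integrableOn_const (measure_ne_top _ _)) hX2.integrableOn
    measurableSet_Ioi fun x hx => ?_
  have : a < x - m := by rw [mem_Ioi] at hx; linarith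
  nlinarith

lemma mul_setIntegral_Ioi_le_setIntegral_sq (hX : Integrable (fun x => x - m) P)
    (hX2 : Integrable (fun x => (x - m) ^ 2) P) (ha : 0 ≤ a) :
    a * ∫ x in Ioi (m + a), (x - m) ∂P ≤ ∫ x in Ioi (m + a), (x - m) ^ 2 ∂P := by
  rw [← integral_const_mul]
  refine setIntegral_mono_on (hX.const_mul a).integrableOn hX2.integrableOn
    measurableSet_Ioi fun x hx => ?_
  have : a < x - m := by rw [mem_Ioi] at hx; linarith
  nlinarith

end Tail

lemma add_div_le_add_mul_div_of_le {m a v I p : ℝ} (hp : 0 < p) (ha : 0 < a) (hv : 0 ≤ v)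
    (hva : v < 2 * a ^ 2) (hI : 2 * a * I ≤ v) (hpv : 2 * a ^ 2 * (1 - p) ≤ v) :
    (I + m * p) / p ≤ m + a * v / (2 * a ^ 2 - v) := by
  rw [add_div, mul_div_cancel_right₀ _ hp.ne', add_comm, add_le_add_iff_left,
    div_le_div_iff₀ hp (by linarith)]
  rcases le_or_gt I 0 with hI0 | hI0
  · nlinarith [mul_nonneg ha.le hv]
  · nlinarith [mul_pos ha hI0]

theorem stmt5 (P : Measure ℝ) [IsProbabilityMeasure P] (m s t : ℝ)
    (hsym : P.map (fun x => 2 * m - x) = P)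
    (hX : Integrable (fun x => x) P) (hX2 : Integrable (fun x => x ^ 2) P)
    (hmean : ∫ x, x ∂P = m) (hvar : ∫ x, (x - m) ^ 2 ∂P = s ^ 2)
    (hs : 0 < s) (ht : t < m - s)
    (hpos : 0 < (P {x : ℝ | t ≤ x}).toReal) :
    (∫ x in {x : ℝ | t ≤ x}, x ∂P) / (P {x : ℝ | t ≤ x}).toReal
      ≤ m + (m - t) * s ^ 2 / (2 * (t - m) ^ 2 - s ^ 2) := by
  obtain ⟨a, rfl⟩ : ∃ a, t = m - a := ⟨m - t, by ring⟩
  have ha : s < a := by linarith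
  have hXm : Integrable (fun x => x - m) P := hX.sub (integrable_const m)
  have hXm2 : Integrable (fun x => (x - m) ^ 2) P := by
    simp_rw [sub_sq]
    exact (hX2.sub ((hX.const_mul 2).mul_const m)).add (integrable_const _)
  have hmean0 : ∫ x, (x - m) ∂P = 0 := by
    simp [integral_sub hX (integrable_const m), hmean]
  have ha0 : 0 ≤ a := hs.le.trans ha.le
  have hI := mul_setIntegral_Ioi_le_setIntegral_sq hXm hXm2 ha0
  have hq := sq_mul_measureReal_Ioi_le_setIntegral hXm2 ha0
  have hJ := two_mul_setIntegral_Ioi_sq_le_of_map_eq hsym hXm2 ha0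
  have hp : P.real (Ici (m - a)) = 1 - P.real (Ioi (m + a)) := by
    rw [← compl_Iio, probReal_compl_eq_one_sub measurableSet_Iio,
      measureReal_Iio_eq_measureReal_Ioi_of_map_eq hsym]
  have hnum : ∫ x in Ici (m - a), x ∂P
      = ∫ x in Ici (m - a), (x - m) ∂P + m * P.real (Ici (m - a)) := by
    rw [integral_sub hX.integrableOn (integrable_const m).integrableOn, setIntegral_const,
      smul_eq_mul]
    ring
  change 0 < P.real (Ici (m - a)) at hpos
  change (∫ x in Ici (m - a), x ∂P) / P.real (Ici (m - a)) ≤ _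
  rw [hnum, setIntegral_Ici_sub_eq_setIntegral_Ioi_of_map_eq hsym hXm hmean0,
    show m - (m - a) = a by ring, show (m - a - m) ^ 2 = a ^ 2 by ring]
  exact add_div_le_add_mul_div_of_le hpos (hs.trans ha) (sq_nonneg s) (by nlinarith)
    (by linarith) (by rw [hp]; linarith)
end

section
/- Let X have a distribution symmetric about μ with variance σ² > 0, and let μ − σ ≤ t < μ. Then E[X | X ≥ t] ≤ μ + σ, provided P(X ≥ t) > 0. Moreover, the symmetric two-point distribution (1/2)δ_{μ−σ} + (1/2)δ_{μ+σ} attains this bound with equality. -/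
/-!
The reflection `x ↦ 2m - x` preserves `P` and maps the left tail `Iio t` onto the right tail
`Ioi u`, `u = 2m - t > m`. So both tails have the same mass `q ≤ 1/2`, the right tail carries at
most half of the variance, and `E[X; X ≥ t] = m (1 - q) + E[X - m; X > u]`. Integrating
`2s (x - m) ≤ (x - m)² + s²` over the right tail gives `E[X - m; X > u] ≤ s/4 + s q/2 ≤ s (1 - q)`.
-/

open MeasureTheory Set
open scoped ENNReal

lemma preimage_reflect_Iio (m t : ℝ) : (fun x : ℝ => 2 * m - x) ⁻¹' Iio t = Ioi (2 * m - t) := by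
  ext x
  simp only [mem_preimage, mem_Iio, mem_Ioi]
  constructor <;> intro <;> linarith

lemma disjoint_Iio_Ioi_reflect {m t : ℝ} (ht : t < m) : Disjoint (Iio t) (Ioi (2 * m - t)) :=
  Iio_disjoint_Ioi_of_le (by linarith)

lemma two_mul_setIntegral_le_setIntegral_sq_add {α : Type*} [MeasurableSpace α] {μ : Measure α}
    [IsFiniteMeasure μ] {f : α → ℝ} {S : Set α} (hf : IntegrableOn f S μ)
    (hf2 : IntegrableOn (fun x => f x ^ 2) S μ) (c : ℝ) :
    2 * c * ∫ x in S, f x ∂μ ≤ ∫ x in S, f x ^ 2 ∂μ + c ^ 2 * μ.real S := by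
  calc 2 * c * ∫ x in S, f x ∂μ = ∫ x in S, 2 * c * f x ∂μ := (integral_const_mul _ _).symm
    _ ≤ ∫ x in S, (f x ^ 2 + c ^ 2) ∂μ :=
        integral_mono (hf.const_mul _) (Integrable.add hf2 (integrable_const _))
          fun x => by nlinarith [two_mul_le_add_sq c (f x)]
    _ = ∫ x in S, f x ^ 2 ∂μ + c ^ 2 * μ.real S := by
        rw [integral_add hf2 (integrable_const _), setIntegral_const, smul_eq_mul, mul_comm]

namespace MeasureTheory.MeasurePreserving

variable {P : Measure ℝ} {m : ℝ}

lemma measureReal_Iio_eq_Ioi_reflect (hsym : MeasurePreserving (fun x => 2 * m - x) P P)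
    (t : ℝ) : P.real (Iio t) = P.real (Ioi (2 * m - t)) := by
  rw [← preimage_reflect_Iio, hsym.measureReal_preimage measurableSet_Iio.nullMeasurableSet]

lemma setIntegral_Iio_eq_Ioi_reflect (hsym : MeasurePreserving (fun x => 2 * m - x) P P)
    (f : ℝ → ℝ) (t : ℝ) : ∫ x in Iio t, f x ∂P = ∫ x in Ioi (2 * m - t), f (2 * m - x) ∂P := by
  rw [← preimage_reflect_Iio,
    hsym.setIntegral_preimage_emb (Homeomorph.subLeft (2 * m)).measurableEmbedding]

lemma two_mul_measureReal_Iio_le_one [IsProbabilityMeasure P]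
    (hsym : MeasurePreserving (fun x => 2 * m - x) P P) {t : ℝ} (ht : t < m) :
    2 * P.real (Iio t) ≤ 1 :=
  calc 2 * P.real (Iio t) = P.real (Iio t ∪ Ioi (2 * m - t)) := by
        rw [measureReal_union (disjoint_Iio_Ioi_reflect ht) measurableSet_Ioi,
          ← hsym.measureReal_Iio_eq_Ioi_reflect]
        ring
    _ ≤ 1 := measureReal_le_one

lemma two_mul_setIntegral_Ioi_sq_le (hsym : MeasurePreserving (fun x => 2 * m - x) P P)
    {t : ℝ} (ht : t < m) (hint : Integrable (fun x => (x - m) ^ 2) P) :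
    2 * ∫ x in Ioi (2 * m - t), (x - m) ^ 2 ∂P ≤ ∫ x, (x - m) ^ 2 ∂P :=
  calc 2 * ∫ x in Ioi (2 * m - t), (x - m) ^ 2 ∂P
      = ∫ x in Iio t ∪ Ioi (2 * m - t), (x - m) ^ 2 ∂P := by
        rw [setIntegral_union (disjoint_Iio_Ioi_reflect ht) measurableSet_Ioi hint.integrableOn
          hint.integrableOn, hsym.setIntegral_Iio_eq_Ioi_reflect]
        simp only [show ∀ x : ℝ, (2 * m - x - m) ^ 2 = (x - m) ^ 2 from fun x => by ring]
        ring
    _ ≤ ∫ x, (x - m) ^ 2 ∂P :=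
        setIntegral_le_integral hint (Filter.Eventually.of_forall fun _ => sq_nonneg _)

lemma setIntegral_Ici_eq [IsFiniteMeasure P] (hsym : MeasurePreserving (fun x => 2 * m - x) P P)
    (hX : Integrable (fun x => x) P) (hmean : ∫ x, x ∂P = m) (t : ℝ) :
    ∫ x in Ici t, x ∂P = m - m * P.real (Iio t) + ∫ x in Ioi (2 * m - t), (x - m) ∂P := by
  have hsplit : ∫ x in Ici t, x ∂P + ∫ x in Iio t, x ∂P = m := by
    rw [← hmean, ← integral_add_compl measurableSet_Ici hX, compl_Ici]
  have hleft : ∫ x in Iio t, x ∂P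
      = 2 * m * P.real (Iio t) - ∫ x in Ioi (2 * m - t), x ∂P := by
    rw [hsym.setIntegral_Iio_eq_Ioi_reflect (fun x => x),
      integral_sub (integrable_const _).integrableOn hX.integrableOn, setIntegral_const,
      smul_eq_mul, ← hsym.measureReal_Iio_eq_Ioi_reflect]
    ring
  have hright : ∫ x in Ioi (2 * m - t), (x - m) ∂P
      = ∫ x in Ioi (2 * m - t), x ∂P - m * P.real (Iio t) := by
    rw [integral_sub hX.integrableOn (integrable_const _).integrableOn, setIntegral_const,
      smul_eq_mul, ← hsym.measureReal_Iio_eq_Ioi_reflect]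
    ring
  linarith

lemma setIntegral_Ici_div_measureReal_le [IsProbabilityMeasure P]
    (hsym : MeasurePreserving (fun x => 2 * m - x) P P)
    (hX : Integrable (fun x => x) P) (hX2 : Integrable (fun x => x ^ 2) P)
    (hmean : ∫ x, x ∂P = m) {s t : ℝ} (hvar : ∫ x, (x - m) ^ 2 ∂P = s ^ 2)
    (hs : 0 < s) (ht : t < m) :
    (∫ x in Ici t, x ∂P) / P.real (Ici t) ≤ m + s := by
  have hXm : Integrable (fun x => x - m) P := hX.sub (integrable_const m)
  have hXm2 : Integrable (fun x => (x - m) ^ 2) P := by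
    refine ((hX2.sub (hX.const_mul (2 * m))).add (integrable_const (m ^ 2))).congr
      (ae_of_all _ fun x => ?_)
    simp only [Pi.add_apply, Pi.sub_apply]
    ring
  set q := P.real (Iio t)
  have hq : 2 * q ≤ 1 := hsym.two_mul_measureReal_Iio_le_one ht
  have hV := hsym.two_mul_setIntegral_Ioi_sq_le ht hXm2
  have hJ := two_mul_setIntegral_le_setIntegral_sq_add (S := Ioi (2 * m - t))
    hXm.integrableOn hXm2.integrableOn s
  rw [← hsym.measureReal_Iio_eq_Ioi_reflect] at hJ
  have hIci : P.real (Ici t) = 1 - q := by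
    rw [← compl_Iio, probReal_compl_eq_one_sub measurableSet_Iio]
  rw [hIci, div_le_iff₀ (by linarith), hsym.setIntegral_Ici_eq hX hmean]
  nlinarith

end MeasureTheory.MeasurePreserving

lemma restrict_Ici_add_dirac {a b t : ℝ} (ha : a < t) (hb : t ≤ b) (c d : ℝ≥0∞) :
    (c • Measure.dirac a + d • Measure.dirac b).restrict (Ici t) = d • Measure.dirac b := by
  classical
  rw [Measure.restrict_add, Measure.restrict_smul, Measure.restrict_smul, restrict_dirac,
    restrict_dirac, if_neg (notMem_Ici.mpr ha), if_pos (mem_Ici.mpr hb), smul_zero, zero_add]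

lemma setIntegral_Ici_div_measureReal_add_dirac {a b t : ℝ} (ha : a < t) (hb : t ≤ b)
    {c d : ℝ≥0∞} (hd₀ : d ≠ 0) (hd : d ≠ ∞) :
    (∫ x in Ici t, x ∂(c • Measure.dirac a + d • Measure.dirac b)) /
      (c • Measure.dirac a + d • Measure.dirac b).real (Ici t) = b := by
  set Q := c • Measure.dirac a + d • Measure.dirac b
  have hQ : Q.restrict (Ici t) = d • Measure.dirac b := restrict_Ici_add_dirac ha hb c d
  have hmass : Q.real (Ici t) = d.toReal := by
    rw [measureReal_def, ← Measure.restrict_apply_univ, hQ]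
    simp
  rw [hQ, hmass, integral_smul_measure, integral_dirac, smul_eq_mul,
    mul_div_cancel_left₀ _ (ENNReal.toReal_ne_zero.mpr ⟨hd₀, hd⟩)]

theorem stmt6_general (P : Measure ℝ) [IsProbabilityMeasure P] (m s t : ℝ)
    (hsym : P.map (fun x => 2 * m - x) = P)
    (hX : Integrable (fun x => x) P) (hX2 : Integrable (fun x => x ^ 2) P)
    (hmean : ∫ x, x ∂P = m) (hvar : ∫ x, (x - m) ^ 2 ∂P = s ^ 2)
    (hs : 0 < s) (ht2 : t < m) :
    ((∫ x in {x : ℝ | t ≤ x}, x ∂P) / (P {x : ℝ | t ≤ x}).toReal ≤ m + s) ∧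
      (let Q : Measure ℝ :=
        (1 / 2 : ℝ≥0∞) • Measure.dirac (m - s) + (1 / 2 : ℝ≥0∞) • Measure.dirac (m + s)
       m - s < t →
         (∫ x in {x : ℝ | t ≤ x}, x ∂Q) / (Q {x : ℝ | t ≤ x}).toReal = m + s) := by
  have hrefl : MeasurePreserving (fun x => 2 * m - x) P P := ⟨by fun_prop, hsym⟩
  exact ⟨hrefl.setIntegral_Ici_div_measureReal_le hX hX2 hmean hvar hs ht2,
    fun hlt => setIntegral_Ici_div_measureReal_add_dirac hlt (by linarith) (by simp) (by simp)⟩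

theorem stmt6 (P : Measure ℝ) [IsProbabilityMeasure P] (m s t : ℝ)
    (hsym : P.map (fun x => 2 * m - x) = P)
    (hX : Integrable (fun x => x) P) (hX2 : Integrable (fun x => x ^ 2) P)
    (hmean : ∫ x, x ∂P = m) (hvar : ∫ x, (x - m) ^ 2 ∂P = s ^ 2)
    (hs : 0 < s) (ht1 : m - s ≤ t) (ht2 : t < m)
    (hpos : 0 < (P {x : ℝ | t ≤ x}).toReal) :
    ((∫ x in {x : ℝ | t ≤ x}, x ∂P) / (P {x : ℝ | t ≤ x}).toReal ≤ m + s) ∧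
      (let Q : Measure ℝ :=
        (1 / 2 : ℝ≥0∞) • Measure.dirac (m - s) + (1 / 2 : ℝ≥0∞) • Measure.dirac (m + s)
       m - s < t →
         (∫ x in {x : ℝ | t ≤ x}, x ∂Q) / (Q {x : ℝ | t ≤ x}).toReal = m + s) :=
  stmt6_general P m s t hsym hX hX2 hmean hvar hs ht2
end

section
/- Suppose that for all probability measures P in a set 𝒫 we have P(X ∈ Ξ) ≥ ε > 0 and |g| ≤ M on the support. Let τ* = sup over P ∈ 𝒫 of E_P[g(X)·1_Ξ(X)]/E_P[1_Ξ(X)]. Then τ* is finite, and τ* equals the infimum of all τ ∈ ℝ such that sup over P ∈ 𝒫 of E_P[g(X)·1_Ξ(X) − τ·1_Ξ(X)] ≤ 0. -/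
/-!
Since `μ.real s > 0`, a conditional mean `(∫ x in s, g x ∂μ) / μ.real s` is at most `τ` exactly
when `∫ x in s, (g x - τ) ∂μ ≤ 0`. Hence the set of admissible `τ` is the set
of upper bounds of the conditional means, whose infimum is their supremum; the means are bounded
by `M`, so that supremum is finite.
-/

open MeasureTheory

namespace MeasureTheory

variable {Ω : Type*} [MeasurableSpace Ω] {μ : Measure Ω} {s : Set Ω} {g : Ω → ℝ}

theorem setIntegral_div_measureReal_le_iff (hg : IntegrableOn g s μ) (hs : 0 < μ.real s)
    (τ : ℝ) : (∫ x in s, g x ∂μ) / μ.real s ≤ τ ↔ ∫ x in s, (g x - τ) ∂μ ≤ 0 := by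
  have : IsFiniteMeasure (μ.restrict s) :=
    isFiniteMeasure_restrict.mpr (ENNReal.toReal_pos_iff.mp hs).2.ne
  rw [integral_sub hg (integrable_const τ), setIntegral_const, smul_eq_mul, sub_nonpos,
    div_le_iff₀ hs, mul_comm]

theorem setIntegral_div_measureReal_le_of_le (hg : IntegrableOn g s μ) (hs : 0 < μ.real s)
    {M : ℝ} (hM : ∀ x, g x ≤ M) : (∫ x in s, g x ∂μ) / μ.real s ≤ M :=
  (setIntegral_div_measureReal_le_iff hg hs M).mpr <|
    integral_nonpos fun x => sub_nonpos.mpr (hM x)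

end MeasureTheory

theorem stmt10_general {Ω : Type*} [MeasurableSpace Ω] (Ps : Set (Measure Ω))
    (hPs : Ps.Nonempty)
    (Ξ : Set Ω)
    (g : Ω → ℝ) (hg : Measurable g) (M : ℝ) (hbound : ∀ x, |g x| ≤ M)
    (ε : ℝ) (hε : 0 < ε) (hlow : ∀ P ∈ Ps, ε ≤ (P Ξ).toReal) :
    BddAbove {r : ℝ | ∃ P ∈ Ps, r = (∫ x in Ξ, g x ∂P) / (P Ξ).toReal} ∧
      sSup {r : ℝ | ∃ P ∈ Ps, r = (∫ x in Ξ, g x ∂P) / (P Ξ).toReal}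
        = sInf {τ : ℝ | ∀ P ∈ Ps, ∫ x in Ξ, (g x - τ) ∂P ≤ 0} := by
  set S := {r : ℝ | ∃ P ∈ Ps, r = (∫ x in Ξ, g x ∂P) / (P Ξ).toReal}
  have hpos : ∀ P ∈ Ps, 0 < P.real Ξ := fun P hP => hε.trans_le (hlow P hP)
  have hint : ∀ P ∈ Ps, IntegrableOn g Ξ P := fun P hP =>
    Measure.integrableOn_of_bounded (ENNReal.toReal_pos_iff.mp (hpos P hP)).2.ne
      hg.aestronglyMeasurable (M := M) <|
        ae_of_all _ fun x => (Real.norm_eq_abs _).trans_le (hbound x)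
  have hbdd : BddAbove S := ⟨M, by
    rintro r ⟨P, hP, rfl⟩
    exact setIntegral_div_measureReal_le_of_le (hint P hP) (hpos P hP) fun x =>
      (le_abs_self _).trans (hbound x)⟩
  have hadmissible : {τ : ℝ | ∀ P ∈ Ps, ∫ x in Ξ, (g x - τ) ∂P ≤ 0} = upperBounds S := by
    ext τ
    constructor
    · rintro h _ ⟨P, hP, rfl⟩
      exact (setIntegral_div_measureReal_le_iff (hint P hP) (hpos P hP) τ).mpr (h P hP)
    · intro h P hP
      exact (setIntegral_div_measureReal_le_iff (hint P hP) (hpos P hP) τ).mp (h ⟨P, hP, rfl⟩)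
  obtain ⟨P, hP⟩ := hPs
  exact ⟨hbdd, by rw [hadmissible, csInf_upperBounds_eq_csSup hbdd ⟨_, P, hP, rfl⟩]⟩

theorem stmt10 {Ω : Type*} [MeasurableSpace Ω] (Ps : Set (Measure Ω))
    (hPs : Ps.Nonempty) (hprob : ∀ P ∈ Ps, IsProbabilityMeasure P)
    (Ξ : Set Ω) (hΞ : MeasurableSet Ξ)
    (g : Ω → ℝ) (hg : Measurable g) (M : ℝ) (hbound : ∀ x, |g x| ≤ M)
    (ε : ℝ) (hε : 0 < ε) (hlow : ∀ P ∈ Ps, ε ≤ (P Ξ).toReal) :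
    BddAbove {r : ℝ | ∃ P ∈ Ps, r = (∫ x in Ξ, g x ∂P) / (P Ξ).toReal} ∧
      sSup {r : ℝ | ∃ P ∈ Ps, r = (∫ x in Ξ, g x ∂P) / (P Ξ).toReal}
        = sInf {τ : ℝ | ∀ P ∈ Ps, ∫ x in Ξ, (g x - τ) ∂P ≤ 0} :=
  stmt10_general Ps hPs Ξ g hg M hbound ε hε hlow
end

section
/- For a random variable X with mean μ and variance σ², and real numbers t < μ, define the quadratic M(x) = λ₀ + λ₁x + λ₂x² with λ₂ > 0 and suppose M(x) ≥ 0 for all x < t and M(x) ≥ x − λ₃ for all x ≥ t, and λ₀ + λ₁μ + λ₂(σ²+μ²) ≤ 0. Then for any such X with P(X ≥ t) > 0, E[X·1_{X≥t}] ≤ λ₃·P(X ≥ t). -/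
/-! Pointwise the quadratic `M x = l0 + l1 x + l2 x²` dominates `(x - l3) · 1_{x ≥ t}`,
so integrating against `P` gives `∫_{x ≥ t} (x - l3) dP ≤ E[M(X)] = l0 + l1 m + l2 (v + m²) ≤ 0`. -/

open MeasureTheory

lemma setIntegral_le_integral_of_indicator_le {α : Type*} [MeasurableSpace α] {μ : Measure α}
    {s : Set α} {f F : α → ℝ} (hs : MeasurableSet s) (hf : IntegrableOn f s μ)
    (hF : Integrable F μ) (h : ∀ x, s.indicator f x ≤ F x) :
    ∫ x in s, f x ∂μ ≤ ∫ x, F x ∂μ := by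
  rw [← integral_indicator hs]
  exact integral_mono ((integrable_indicator_iff hs).2 hf) hF h

lemma integral_quadratic {P : Measure ℝ} [IsProbabilityMeasure P] (a b c : ℝ)
    (h1 : Integrable (fun x => x) P) (h2 : Integrable (fun x => x ^ 2) P) :
    ∫ x, (a + b * x + c * x ^ 2) ∂P = a + b * ∫ x, x ∂P + c * ∫ x, x ^ 2 ∂P := by
  have hlin : Integrable (fun x => a + b * x) P := (integrable_const a).add (h1.const_mul b)
  rw [integral_add hlin (h2.const_mul c),
    integral_add (integrable_const a) (h1.const_mul b), integral_const_mul, integral_const_mul]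
  simp

theorem stmt12_general (P : Measure ℝ) [IsProbabilityMeasure P] (m v t l0 l1 l2 l3 : ℝ)
    (hX : Integrable (fun x => x) P) (hX2 : Integrable (fun x => x ^ 2) P)
    (hmean : ∫ x, x ∂P = m) (hm2 : ∫ x, x ^ 2 ∂P = v + m ^ 2)
    (hM1 : ∀ x < t, 0 ≤ l0 + l1 * x + l2 * x ^ 2)
    (hM2 : ∀ x, t ≤ x → x - l3 ≤ l0 + l1 * x + l2 * x ^ 2)
    (hfeas : l0 + l1 * m + l2 * (v + m ^ 2) ≤ 0) :
    ∫ x in {x : ℝ | t ≤ x}, x ∂P ≤ l3 * (P {x : ℝ | t ≤ x}).toReal := by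
  set s : Set ℝ := {x : ℝ | t ≤ x}
  have hs : MeasurableSet s := measurableSet_Ici
  have hdom : ∀ x, s.indicator (fun x => x - l3) x ≤ l0 + l1 * x + l2 * x ^ 2 := by
    intro x
    by_cases hx : t ≤ x
    · simpa [s, hx] using hM2 x hx
    · simpa [s, hx] using hM1 x (not_le.1 hx)
  have hmono : ∫ x in s, (x - l3) ∂P ≤ ∫ x, (l0 + l1 * x + l2 * x ^ 2) ∂P :=
    setIntegral_le_integral_of_indicator_le hs (hX.sub (integrable_const l3)).integrableOn
      (((integrable_const l0).add (hX.const_mul l1)).add (hX2.const_mul l2)) hdom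
  rw [integral_quadratic l0 l1 l2 hX hX2, hmean, hm2,
    integral_sub hX.integrableOn (integrable_const l3), setIntegral_const] at hmono
  simp only [smul_eq_mul, Measure.real] at hmono
  linarith

theorem stmt12 (P : Measure ℝ) [IsProbabilityMeasure P] (m v t l0 l1 l2 l3 : ℝ)
    (hX : Integrable (fun x => x) P) (hX2 : Integrable (fun x => x ^ 2) P)
    (hmean : ∫ x, x ∂P = m) (hm2 : ∫ x, x ^ 2 ∂P = v + m ^ 2)
    (hl2 : 0 < l2) (ht : t < m)
    (hM1 : ∀ x < t, 0 ≤ l0 + l1 * x + l2 * x ^ 2)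
    (hM2 : ∀ x, t ≤ x → x - l3 ≤ l0 + l1 * x + l2 * x ^ 2)
    (hfeas : l0 + l1 * m + l2 * (v + m ^ 2) ≤ 0)
    (hpos : 0 < (P {x : ℝ | t ≤ x}).toReal) :
    ∫ x in {x : ℝ | t ≤ x}, x ∂P ≤ l3 * (P {x : ℝ | t ≤ x}).toReal :=
  stmt12_general P m v t l0 l1 l2 l3 hX hX2 hmean hm2 hM1 hM2 hfeas
end

section
/- Let X be a real random variable with mean μ, let d : ℝ → ℝ be convex with E[d(X)] ≤ σ̄, and suppose λ₀, λ₁, λ₂ ∈ ℝ with λ₂ ≥ 0 satisfy: V(x) := λ₀ + λ₁x + λ₂d(x) ≥ 0 for all x < t, V(x) ≥ x − λ₃ for all x ≥ t, and λ₀ + λ₁μ + λ₂σ̄ ≤ 0. Then E[X | X ≥ t] ≤ λ₃ whenever P(X ≥ t) > 0. -/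
/-!
Integrating the dual certificate `V x = l0 + l1 * x + l2 * d x` against `P` gives
`∫ V = l0 + l1 * m + l2 * E[d X] ≤ 0`. Since `V ≥ 0` below `t`, the part of `∫ V` over `{t ≤ x}`
is still `≤ 0`, and there `V x ≥ x - l3`, so `E[X ; X ≥ t] - l3 * P(X ≥ t) ≤ 0`.
-/

open MeasureTheory

variable {α : Type*} [MeasurableSpace α] {μ : Measure α}

theorem setIntegral_le_mul_measureReal_of_le_of_integral_nonpos [IsFiniteMeasure μ]
    {f V : α → ℝ} {S : Set α} {c : ℝ} (hS : MeasurableSet S) (hf : IntegrableOn f S μ)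
    (hV : Integrable V μ) (hV_int : ∫ x, V x ∂μ ≤ 0) (hV_compl : ∀ x ∈ Sᶜ, 0 ≤ V x)
    (hV_S : ∀ x ∈ S, f x - c ≤ V x) :
    ∫ x in S, f x ∂μ ≤ c * μ.real S := by
  have hV_compl_nonneg : 0 ≤ ∫ x in Sᶜ, V x ∂μ := setIntegral_nonneg hS.compl hV_compl
  have hV_S_nonpos : ∫ x in S, V x ∂μ ≤ 0 := by
    linarith [integral_add_compl hS hV]
  have hle : ∫ x in S, (f x - c) ∂μ ≤ ∫ x in S, V x ∂μ :=
    setIntegral_mono_on (hf.sub (integrableOn_const (measure_ne_top μ S))) hV.integrableOn hS hV_S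
  rw [integral_sub hf (integrableOn_const (measure_ne_top μ S)), setIntegral_const,
    smul_eq_mul, mul_comm] at hle
  linarith

theorem integral_affine_add_mul [IsProbabilityMeasure μ] {X g : α → ℝ} (hX : Integrable X μ)
    (hg : Integrable g μ) (a b c : ℝ) :
    ∫ x, (a + b * X x + c * g x) ∂μ = a + b * ∫ x, X x ∂μ + c * ∫ x, g x ∂μ := by
  rw [integral_add (f := fun x => a + b * X x) ((integrable_const a).add (hX.const_mul b))
      (hg.const_mul c), integral_add (integrable_const a) (hX.const_mul b), integral_const, integral_const_mul,
    integral_const_mul, probReal_univ, one_smul]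

theorem stmt14_general (P : Measure ℝ) [IsProbabilityMeasure P] (m sbar t l0 l1 l2 l3 : ℝ)
    (d : ℝ → ℝ)
    (hX : Integrable (fun x => x) P) (hdint : Integrable (fun x => d x) P)
    (hmean : ∫ x, x ∂P = m) (hdisp : ∫ x, d x ∂P ≤ sbar)
    (hl2 : 0 ≤ l2)
    (hV1 : ∀ x < t, 0 ≤ l0 + l1 * x + l2 * d x)
    (hV2 : ∀ x, t ≤ x → x - l3 ≤ l0 + l1 * x + l2 * d x)
    (hfeas : l0 + l1 * m + l2 * sbar ≤ 0)
    (hpos : 0 < (P {x : ℝ | t ≤ x}).toReal) :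
    (∫ x in {x : ℝ | t ≤ x}, x ∂P) / (P {x : ℝ | t ≤ x}).toReal ≤ l3 := by
  have hV : Integrable (fun x => l0 + l1 * x + l2 * d x) P :=
    ((integrable_const l0).add (hX.const_mul l1)).add (hdint.const_mul l2)
  have hV_int : ∫ x, (l0 + l1 * x + l2 * d x) ∂P ≤ 0 :=
    calc ∫ x, (l0 + l1 * x + l2 * d x) ∂P = l0 + l1 * m + l2 * ∫ x, d x ∂P := by
          rw [integral_affine_add_mul hX hdint, hmean]
      _ ≤ l0 + l1 * m + l2 * sbar := by gcongr
      _ ≤ 0 := hfeas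
  rw [div_le_iff₀ hpos]
  exact setIntegral_le_mul_measureReal_of_le_of_integral_nonpos measurableSet_Ici hX.integrableOn
    hV hV_int (fun x hx => hV1 x (not_le.mp hx)) hV2

theorem stmt14 (P : Measure ℝ) [IsProbabilityMeasure P] (m sbar t l0 l1 l2 l3 : ℝ)
    (d : ℝ → ℝ) (hconv : ConvexOn ℝ Set.univ d)
    (hX : Integrable (fun x => x) P) (hdint : Integrable (fun x => d x) P)
    (hmean : ∫ x, x ∂P = m) (hdisp : ∫ x, d x ∂P ≤ sbar)
    (hl2 : 0 ≤ l2)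
    (hV1 : ∀ x < t, 0 ≤ l0 + l1 * x + l2 * d x)
    (hV2 : ∀ x, t ≤ x → x - l3 ≤ l0 + l1 * x + l2 * d x)
    (hfeas : l0 + l1 * m + l2 * sbar ≤ 0)
    (hpos : 0 < (P {x : ℝ | t ≤ x}).toReal) :
    (∫ x in {x : ℝ | t ≤ x}, x ∂P) / (P {x : ℝ | t ≤ x}).toReal ≤ l3 :=
  stmt14_general P m sbar t l0 l1 l2 l3 d hX hdint hmean hdisp hl2 hV1 hV2 hfeas hpos
end

section
/- Mean-dispersion weak duality in the multivariate case: let d : ℝⁿ → ℝᵐ, Ξ ⊆ ℝⁿ measurable, and suppose λ₀ ∈ ℝ, λ₁ ∈ ℝⁿ, λ₂ ∈ ℝᵐ, λ₃ ∈ ℝ satisfy λ₀ + λ₁ᵀμ + λ₂ᵀσ ≤ 0, the pointwise inequality λ₀ + λ₁ᵀx + λ₂ᵀd(x) ≥ (f(x) − λ₃)·1_Ξ(x) for all x ∈ ℝⁿ, and λ₂ᵀ(σ − E_P[d(X)]) ≥ 0 for the measure P under consideration. Then for any probability measure P with E_P[X] = μ, and P(X ∈ Ξ) > 0, one has E_P[f(X)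 | X ∈ Ξ] ≤ λ₃. -/
/-!
Integrate the pointwise dual inequality against `P`. The left side integrates to
`∫_Ξ f - λ₃ P(Ξ)`; the right side is affine in `x` and `d x`, so it integrates to
`λ₀ + λ₁ᵀμ + λ₂ᵀE[d(X)]`, which the cone condition bounds by `λ₀ + λ₁ᵀμ + λ₂ᵀσ ≤ 0`.
Dividing by `P(Ξ) > 0` gives the bound on the conditional expectation.
-/

open MeasureTheory

theorem Set.mul_indicator_one_eq_indicator {α M₀ : Type*} [MulZeroOneClass M₀] (s : Set α)
    (f : α → M₀) (x : α) : f x * s.indicator (fun _ => 1) x = s.indicator f x := by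
  simpa using (s.indicator_mul_right f (fun _ => (1 : M₀)) (i := x)).symm

namespace MeasureTheory

variable {α : Type*} [MeasurableSpace α] {μ : Measure α}

theorem Integrable.sum_const_mul {ι : Type*} [Fintype ι] {g : ι → α → ℝ}
    (hg : ∀ i, Integrable (g i) μ) (c : ι → ℝ) : Integrable (fun x => ∑ i, c i * g i x) μ :=
  integrable_finsetSum _ fun i _ => (hg i).const_mul (c i)

theorem integral_sum_const_mul {ι : Type*} [Fintype ι] {g : ι → α → ℝ}
    (hg : ∀ i, Integrable (g i) μ) (c : ι → ℝ) :
    ∫ x, ∑ i, c i * g i x ∂μ = ∑ i, c i * ∫ x, g i x ∂μ := by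
  rw [integral_finsetSum _ fun i _ => (hg i).const_mul (c i)]
  simp only [integral_const_mul]

theorem setIntegral_div_measureReal_le_of_indicator_sub_le [IsFiniteMeasure μ] {s : Set α}
    (hs : MeasurableSet s) {f ψ : α → ℝ} {c : ℝ} (hf : IntegrableOn f s μ)
    (hψ : Integrable ψ μ) (hle : ∀ x, s.indicator (fun x => f x - c) x ≤ ψ x)
    (hψ_nonpos : ∫ x, ψ x ∂μ ≤ 0) (hs_pos : 0 < μ.real s) :
    (∫ x in s, f x ∂μ) / μ.real s ≤ c := by
  have hc : IntegrableOn (fun _ => c) s μ := integrableOn_const (by simp)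
  have hsub : IntegrableOn (fun x => f x - c) s μ := hf.sub hc
  have hmono := integral_mono (hsub.integrable_indicator hs) hψ hle
  have hleft : ∫ x, s.indicator (fun x => f x - c) x ∂μ = ∫ x in s, f x ∂μ - c * μ.real s := by
    rw [integral_indicator hs, integral_sub hf hc, setIntegral_const,
      smul_eq_mul, mul_comm]
  rw [div_le_iff₀ hs_pos]
  linarith

end MeasureTheory

theorem stmt19 (n mdim : ℕ) (P : Measure (Fin n → ℝ)) [IsProbabilityMeasure P]
    (d : (Fin n → ℝ) → Fin mdim → ℝ) (f : (Fin n → ℝ) → ℝ)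
    (Ξ : Set (Fin n → ℝ)) (hΞ : MeasurableSet Ξ)
    (muv : Fin n → ℝ) (sigv : Fin mdim → ℝ)
    (l0 l3 : ℝ) (l1 : Fin n → ℝ) (l2 : Fin mdim → ℝ)
    (hXint : ∀ i, Integrable (fun x => x i) P)
    (hdint : ∀ j, Integrable (fun x => d x j) P)
    (hfint : Integrable (fun x => f x * Ξ.indicator (fun _ => (1 : ℝ)) x) P)
    (hmean : ∀ i, ∫ x, x i ∂P = muv i)
    (hdual1 : l0 + ∑ i, l1 i * muv i + ∑ j, l2 j * sigv j ≤ 0)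
    (hpoint : ∀ x, (f x - l3) * Ξ.indicator (fun _ => (1 : ℝ)) x ≤
        l0 + ∑ i, l1 i * x i + ∑ j, l2 j * d x j)
    (hcone : 0 ≤ ∑ j, l2 j * (sigv j - ∫ x, d x j ∂P))
    (hpos : 0 < (P Ξ).toReal) :
    (∫ x in Ξ, f x ∂P) / (P Ξ).toReal ≤ l3 := by
  rw [funext (Set.mul_indicator_one_eq_indicator Ξ f)] at hfint
  have hX := Integrable.sum_const_mul hXint l1
  have hd := Integrable.sum_const_mul hdint l2
  have hl0X := (integrable_const l0).fun_add hX
  have hmajorant : ∫ x, (l0 + ∑ i, l1 i * x i + ∑ j, l2 j * d x j) ∂P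
      = l0 + ∑ i, l1 i * muv i + ∑ j, l2 j * ∫ x, d x j ∂P := by
    rw [integral_add hl0X hd, integral_add (integrable_const l0) hX,
      integral_sum_const_mul hXint, integral_sum_const_mul hdint]
    simp [hmean]
  simp only [mul_sub, Finset.sum_sub_distrib] at hcone
  exact setIntegral_div_measureReal_le_of_indicator_sub_le hΞ
    ((integrable_indicator_iff hΞ).1 hfint) (hl0X.fun_add hd)
    (fun x => (Set.mul_indicator_one_eq_indicator Ξ _ x).symm.trans_le (hpoint x))
    (hmajorant.trans_le (by linarith)) hpos
end
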